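/- arXiv:2605.05102 — 3 statements merged into one kernel-verified Lean document; each statement's English description precedes it below -/
import Mathlib

section
/- Let X be a real-valued random variable with X ≤ 1 almost surely and E[X] ≤ 0. Then for every λ ≥ 0, E[exp(λX)] ≤ exp((e^λ - 1 - λ)·Var(X)). -/
open MeasureTheory ProbabilityTheory Real

/-!
Since `(exp t - 1 - t) / t ^ 2 = ∫₀¹ (1 - u) exp (t u) du` is increasing in `t`, a variable bounded
above by `b` satisfies `exp (l u) ≤ 1 + l u + u² (exp (l b) - 1 - l b) / b²`. Applied to
`X - E X ≤ 1 - E X` and integrated, this bounds `E exp (l X)` by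
`exp (l E X) (1 + Var X (exp (l b) - 1 - l b) / b²)` with `b = 1 - E X ≥ 1`; a one-variable
calculus estimate shows that this coefficient is at most `exp l - 1 - l` when `E X ≤ 0`,
and `1 + y ≤ exp y` finishes.
-/

lemma integral_one_sub_mul_exp_mul {t : ℝ} (ht : t ≠ 0) :
    ∫ u in (0:ℝ)..1, (1 - u) * exp (t * u) = (exp t - 1 - t) / t ^ 2 := by
  have hF : ∀ u : ℝ, HasDerivAt (fun u ↦ exp (t * u) * ((t + 1) / t ^ 2 - u / t))
      ((1 - u) * exp (t * u)) u := by
    intro u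
    have hexp : HasDerivAt (fun u ↦ exp (t * u)) (exp (t * u) * t) u := by
      simpa using ((hasDerivAt_id u).const_mul t).exp
    have hlin : HasDerivAt (fun u ↦ (t + 1) / t ^ 2 - u / t) (-(1 / t)) u := by
      simpa using ((hasDerivAt_id u).div_const t).const_sub ((t + 1) / t ^ 2)
    refine (hexp.mul hlin).congr_deriv ?_
    field_simp
    ring
  rw [intervalIntegral.integral_eq_sub_of_hasDerivAt (fun u _ ↦ hF u)
    (by apply Continuous.intervalIntegrable; fun_prop)]
  simp only [mul_one, mul_zero, exp_zero]
  field_simp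
  ring

/-- `(exp t - 1 - t) / t ^ 2` is monotone, stated with cleared denominators. -/
lemma exp_sub_one_sub_mul_sq_le {t T : ℝ} (h : t ≤ T) :
    (exp t - 1 - t) * T ^ 2 ≤ (exp T - 1 - T) * t ^ 2 := by
  rcases eq_or_ne t 0 with rfl | ht
  · simp
  rcases eq_or_ne T 0 with rfl | hT
  · simp
  have hmono : ∫ u in (0:ℝ)..1, (1 - u) * exp (t * u)
      ≤ ∫ u in (0:ℝ)..1, (1 - u) * exp (T * u) := by
    apply intervalIntegral.integral_mono_on zero_le_one
      (by apply Continuous.intervalIntegrable; fun_prop)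
      (by apply Continuous.intervalIntegrable; fun_prop)
    rintro u ⟨hu0, hu1⟩
    gcongr
  rw [integral_one_sub_mul_exp_mul ht, integral_one_sub_mul_exp_mul hT,
    div_le_div_iff₀ (by positivity) (by positivity)] at hmono
  linarith

lemma exp_mul_le_quadratic_of_le {l u b : ℝ} (hl : 0 ≤ l) (hb : b ≠ 0) (hub : u ≤ b) :
    exp (l * u) ≤ 1 + l * u + (exp (l * b) - 1 - l * b) / b ^ 2 * u ^ 2 := by
  rcases hl.eq_or_lt with rfl | hl
  · simp
  have key := exp_sub_one_sub_mul_sq_le (mul_le_mul_of_nonneg_left hub hl.le)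
  have hlb : 0 < (l * b) ^ 2 := by positivity
  rw [div_mul_eq_mul_div, ← sub_le_iff_le_add', le_div_iff₀ (by positivity)]
  nlinarith

lemma exp_mul_mul_exp_sub_one_sub_le {l m : ℝ} (hl : 0 ≤ l) (hm : m ≤ 0) :
    exp (l * m) * (exp (l * (1 - m)) - 1 - l * (1 - m)) ≤ (1 - m) ^ 2 * (exp l - 1 - l) := by
  set g := exp l - 1 - l
  -- `F m ≥ 0` is the claim with `exp (l * m) * exp (l * (1 - m)) = exp l` multiplied out.
  set F : ℝ → ℝ := fun x ↦ (1 - x) ^ 2 * g - exp l + exp (l * x) * (1 + l - l * x)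
  have hF : ∀ x, HasDerivAt F ((1 - x) * (l ^ 2 * exp (l * x) - 2 * g)) x := by
    intro x
    have hexp : HasDerivAt (fun x ↦ exp (l * x)) (exp (l * x) * l) x := by
      simpa using ((hasDerivAt_id x).const_mul l).exp
    have hlin : HasDerivAt (fun x ↦ 1 + l - l * x) (-l) x := by
      simpa using ((hasDerivAt_id x).const_mul l).const_sub (1 + l)
    have hsq : HasDerivAt (fun x ↦ (1 - x) ^ 2) (-(2 * (1 - x))) x := by
      simpa using ((hasDerivAt_id x).const_sub 1).fun_pow 2
    refine (((hsq.mul_const g).sub_const (exp l)).add (hexp.mul hlin)).congr_deriv ?_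
    ring
  have hg : l ^ 2 ≤ 2 * g := by linarith [quadratic_le_exp_of_nonneg hl]
  have hanti : AntitoneOn F (Set.Iic 0) := by
    refine antitoneOn_of_deriv_nonpos (convex_Iic 0)
      (fun x _ ↦ (hF x).continuousAt.continuousWithinAt)
      (fun x _ ↦ (hF x).differentiableAt.differentiableWithinAt) fun x hx ↦ ?_
    rw [interior_Iic, Set.mem_Iio] at hx
    rw [(hF x).deriv]
    have hexp : exp (l * x) ≤ 1 := exp_le_one_iff.2 (mul_nonpos_of_nonneg_of_nonpos hl hx.le)
    have : l ^ 2 * exp (l * x) ≤ 2 * g := by nlinarith [sq_nonneg l]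
    exact mul_nonpos_of_nonneg_of_nonpos (by linarith) (by linarith)
  have hF0 : F 0 = 0 := by simp [F, g]; ring
  have hFm : 0 ≤ F m := hF0 ▸ hanti hm (Set.mem_Iic.2 le_rfl) hm
  have hexp : exp (l * m) * exp (l * (1 - m)) = exp l := by rw [← exp_add]; ring_nf
  simp only [F] at hFm
  nlinarith

lemma integral_exp_mul_le_of_ae_le {Ω : Type*} [MeasurableSpace Ω] {μ : Measure Ω}
    [IsProbabilityMeasure μ] {X : Ω → ℝ} (hX : MemLp X 2 μ) {M l : ℝ} (hl : 0 ≤ l)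
    (hXM : ∀ᵐ ω ∂μ, X ω ≤ M) (hM : μ[X] < M) :
    ∫ ω, exp (l * X ω) ∂μ ≤ exp (l * μ[X]) *
      (1 + (exp (l * (M - μ[X])) - 1 - l * (M - μ[X])) / (M - μ[X]) ^ 2 * Var[X; μ]) := by
  set m := μ[X]
  set c := (exp (l * (M - m)) - 1 - l * (M - m)) / (M - m) ^ 2
  have hcen : Integrable (fun ω ↦ X ω - m) μ := (hX.integrable one_le_two).sub (integrable_const m)
  have hsq : Integrable (fun ω ↦ (X ω - m) ^ 2) μ := (hX.sub (memLp_const m)).integrable_sq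
  have hpt : ∀ᵐ ω ∂μ,
      exp (l * X ω) ≤ exp (l * m) * (1 + l * (X ω - m) + c * (X ω - m) ^ 2) := by
    filter_upwards [hXM] with ω hω
    calc exp (l * X ω) = exp (l * m) * exp (l * (X ω - m)) := by rw [← exp_add]; ring_nf
      _ ≤ _ := by
        gcongr
        exact exp_mul_le_quadratic_of_le hl (sub_pos.2 hM).ne' (by linarith)
  have hlin : Integrable (fun ω ↦ 1 + l * (X ω - m)) μ :=
    (integrable_const 1).add (hcen.const_mul l)
  have hint : ∫ ω, (1 + l * (X ω - m) + c * (X ω - m) ^ 2) ∂μ = 1 + c * Var[X; μ] := by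
    rw [integral_add hlin (hsq.const_mul c),
      integral_add (integrable_const 1) (hcen.const_mul l), integral_const_mul, integral_const_mul,
      integral_sub (hX.integrable one_le_two) (integrable_const m),
      variance_eq_integral hX.aemeasurable]
    simp [m]
  calc ∫ ω, exp (l * X ω) ∂μ
      ≤ ∫ ω, exp (l * m) * (1 + l * (X ω - m) + c * (X ω - m) ^ 2) ∂μ :=
        integral_mono_of_nonneg (.of_forall fun _ ↦ (exp_pos _).le)
          ((hlin.add (hsq.const_mul c)).const_mul _) hpt
    _ = exp (l * m) * (1 + c * Var[X; μ]) := by rw [integral_const_mul, hint]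

theorem subpoisson_mgf_bound_general {Ω : Type*} [MeasureSpace Ω]
    [IsProbabilityMeasure (ℙ : Measure Ω)]
    (X : Ω → ℝ) (hXle : ∀ᵐ ω ∂ℙ, X ω ≤ 1)
    (hL2 : MemLp X 2 ℙ) (hmean : ∫ ω, X ω ∂ℙ ≤ 0) :
    ∀ l : ℝ, 0 ≤ l →
      ∫ ω, Real.exp (l * X ω) ∂ℙ ≤
        Real.exp ((Real.exp l - 1 - l) * variance X ℙ) := by
  intro l hl
  set m := ∫ ω, X ω ∂ℙ
  set g := exp l - 1 - l
  set c := (exp (l * (1 - m)) - 1 - l * (1 - m)) / (1 - m) ^ 2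
  have hc : exp (l * m) * c ≤ g := by
    rw [← mul_div_assoc, div_le_iff₀ (by nlinarith), mul_comm g]
    exact exp_mul_mul_exp_sub_one_sub_le hl hmean
  have hexp : exp (l * m) ≤ 1 := exp_le_one_iff.2 (mul_nonpos_of_nonneg_of_nonpos hl hmean)
  have hV := variance_nonneg X ℙ
  calc ∫ ω, exp (l * X ω) ∂ℙ ≤ exp (l * m) * (1 + c * variance X ℙ) :=
        integral_exp_mul_le_of_ae_le hL2 hl hXle (by linarith)
    _ = exp (l * m) + exp (l * m) * c * variance X ℙ := by ring
    _ ≤ 1 + g * variance X ℙ := by gcongr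
    _ ≤ exp (g * variance X ℙ) := by linarith [add_one_le_exp (g * variance X ℙ)]

theorem subpoisson_mgf_bound {Ω : Type*} [MeasureSpace Ω]
    [IsProbabilityMeasure (ℙ : Measure Ω)]
    (X : Ω → ℝ) (hX : Measurable X) (hXle : ∀ᵐ ω ∂ℙ, X ω ≤ 1)
    (hL2 : MemLp X 2 ℙ) (hmean : ∫ ω, X ω ∂ℙ ≤ 0) :
    ∀ l : ℝ, 0 ≤ l →
      ∫ ω, Real.exp (l * X ω) ∂ℙ ≤
        Real.exp ((Real.exp l - 1 - l) * variance X ℙ) :=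
  subpoisson_mgf_bound_general X hXle hL2 hmean
end

section
/- Let {X_t} be a martingale difference sequence adapted to {F_t} with |X_t| ≤ c almost surely for a constant c ≥ 0. Then for any λ ∈ (0, 1/c] and δ ∈ (0,1], with probability at least 1-δ, for all n ∈ ℕ simultaneously, Σ_{t=1}^n X_t < (e-2)·λ·Σ_{t=1}^n Var(X_t | F_{t-1}) + (1/λ)·log(1/δ). -/
/-!
For `|x| ≤ 1` the exponential series gives `exp x ≤ 1 + x + (e - 2) x²`. Taking conditional
expectations of `exp (λ X_t)` with `|λ X_t| ≤ 1` and `E[X_t | F_{t-1}] = 0` yields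
`E[exp (λ X_t) | F_{t-1}] ≤ exp ((e - 2) λ² E[X_t² | F_{t-1}])`, so
`M_n = exp (λ S_n - (e - 2) λ² V_n)` (`freedmanProcess`) is a nonnegative supermartingale
with `M_0 = 1`.
Ville's maximal inequality (optional stopping at the first time `M` reaches `1/δ`, then Markov)
shows that `M` ever reaches `1/δ` with probability at most `δ`; off that event,
`λ S_n - (e - 2) λ² V_n < log (1/δ)` for every `n`.
-/

open MeasureTheory ProbabilityTheory Real

theorem Real.exp_le_one_add_add_mul_sq {x : ℝ} (hx : |x| ≤ 1) :
    exp x ≤ 1 + x + (exp 1 - 2) * x ^ 2 := by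
  have tail (y : ℝ) :
      HasSum (fun n : ℕ => y ^ (n + 2) / (n + 2).factorial) (exp y - (1 + y)) := by
    have := (hasSum_nat_add_iff' 2).2 (exp_eq_exp_ℝ ▸ NormedSpace.expSeries_div_hasSum_exp y)
    simpa [Finset.sum_range_succ] using this
  have termwise (n : ℕ) :
      x ^ (n + 2) / (n + 2).factorial ≤ x ^ 2 * (1 ^ (n + 2) / (n + 2).factorial) := by
    rw [one_pow, mul_one_div]
    refine div_le_div_of_nonneg_right ?_ (by positivity)
    calc x ^ (n + 2) ≤ |x| ^ n * |x| ^ 2 := by rw [← pow_add, ← abs_pow]; exact le_abs_self _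
      _ ≤ 1 * x ^ 2 := by rw [sq_abs]; gcongr; exact pow_le_one₀ (abs_nonneg x) hx
      _ = x ^ 2 := one_mul _
  linarith [hasSum_le termwise (tail x) ((tail 1).mul_left (x ^ 2))]

section

variable {Ω : Type*} {m0 : MeasurableSpace Ω} {μ : Measure Ω} [IsFiniteMeasure μ]

theorem integrable_exp_of_ae_le {Y : Ω → ℝ} (hY : AEStronglyMeasurable Y μ) {C : ℝ}
    (hC : ∀ᵐ ω ∂μ, Y ω ≤ C) : Integrable (fun ω => exp (Y ω)) μ := by
  refine .of_bound (continuous_exp.comp_aestronglyMeasurable hY) (exp C) ?_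
  filter_upwards [hC] with ω hω
  rwa [Real.norm_eq_abs, abs_exp, exp_le_exp]

theorem condExp_exp_le_of_abs_le_one {m : MeasurableSpace Ω} (hm : m ≤ m0) {Y : Ω → ℝ}
    (hY : AEStronglyMeasurable[m0] Y μ) (hbdd : ∀ᵐ ω ∂μ, |Y ω| ≤ 1) (hmean : μ[Y | m] =ᵐ[μ] 0) :
    μ[fun ω => exp (Y ω) | m] ≤ᵐ[μ] fun ω => exp ((exp 1 - 2) * μ[fun ω => Y ω ^ 2 | m] ω) := by
  have hY_int : Integrable Y μ := .of_bound hY 1 (by simpa only [Real.norm_eq_abs] using hbdd)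
  have hY2_int : Integrable (fun ω => Y ω ^ 2) μ := by
    refine .of_bound (hY.pow 2) 1 ?_
    filter_upwards [hbdd] with ω hω
    rw [norm_pow, Real.norm_eq_abs]
    exact pow_le_one₀ (abs_nonneg _) hω
  have hexp_int : Integrable (fun ω => exp (Y ω)) μ :=
    integrable_exp_of_ae_le hY (hbdd.mono fun _ => le_of_abs_le)
  set q : Ω → ℝ := (fun _ => 1) + Y + (exp 1 - 2) • fun ω => Y ω ^ 2
  have hq_int : Integrable q μ := ((integrable_const 1).add hY_int).add (hY2_int.smul _)
  have hexp_le : (fun ω => exp (Y ω)) ≤ᵐ[μ] q := by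
    filter_upwards [hbdd] with ω hω
    simpa [q] using exp_le_one_add_add_mul_sq hω
  have hcondExp_q : μ[q | m] =ᵐ[μ] fun ω => 1 + (exp 1 - 2) * μ[fun ω => Y ω ^ 2 | m] ω := by
    filter_upwards [condExp_add ((integrable_const 1).add hY_int) (hY2_int.smul (exp 1 - 2)) m,
      condExp_add (integrable_const 1) hY_int m, condExp_smul (exp 1 - 2) (fun ω => Y ω ^ 2) m,
      hmean] with ω h1 h2 h3 h4
    rw [h1, Pi.add_apply, h2, h3, Pi.add_apply, h4, condExp_const hm]
    simp
  filter_upwards [condExp_mono hexp_int hq_int hexp_le, hcondExp_q] with ω h1 h2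
  rw [h2] at h1
  linarith [add_one_le_exp ((exp 1 - 2) * μ[fun ω => Y ω ^ 2 | m] ω)]

theorem MeasureTheory.Supermartingale.measure_exists_le_ge_le {𝒢 : Filtration ℕ m0}
    {f : ℕ → Ω → ℝ} (hf : Supermartingale f 𝒢 μ) (hnonneg : 0 ≤ f) {ε : ℝ} (hε : 0 < ε) (n : ℕ) :
    μ {ω | ∃ k ≤ n, ε ≤ f k ω} ≤ ENNReal.ofReal (μ[f 0] / ε) := by
  set τ : Ω → WithTop ℕ := fun ω => (hittingBtwn f (Set.Ici ε) 0 n ω : ℕ)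
  have hτ : IsStoppingTime 𝒢 τ :=
    hf.stronglyAdapted.adapted.isStoppingTime_hittingBtwn measurableSet_Ici
  have hτ_le (ω : Ω) : τ ω ≤ n := WithTop.coe_le_coe.2 (hittingBtwn_le ω)
  have hτ_int : Integrable (stoppedValue f τ) μ :=
    integrable_stoppedValue ℕ hτ hf.integrable hτ_le
  have hoptional : μ[stoppedValue f τ] ≤ μ[f 0] := by
    have := hf.neg.expected_stoppedValue_mono (isStoppingTime_const 𝒢 0) hτ
      (fun ω => WithTop.coe_le_coe.2 (Nat.zero_le _)) hτ_le
    simp only [stoppedValue_const, Pi.neg_apply, integral_neg] at this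
    linarith [show ∫ ω, stoppedValue (-f) τ ω ∂μ = -∫ ω, stoppedValue f τ ω ∂μ from
      integral_neg _]
  have hmarkov : ε * μ.real {ω | ε ≤ stoppedValue f τ ω} ≤ μ[stoppedValue f τ] :=
    mul_meas_ge_le_integral_of_nonneg (.of_forall fun ω => hnonneg _ _) hτ_int ε
  have hsub : {ω | ∃ k ≤ n, ε ≤ f k ω} ⊆ {ω | ε ≤ stoppedValue f τ ω} :=
    fun ω ⟨k, hk, hfk⟩ => stoppedValue_hittingBtwn_mem ⟨k, ⟨Nat.zero_le _, hk⟩, hfk⟩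
  refine (measure_mono hsub).trans ?_
  rw [← ofReal_measureReal]
  refine ENNReal.ofReal_le_ofReal ((le_div_iff₀ hε).2 ?_)
  rw [mul_comm]
  exact hmarkov.trans hoptional

theorem MeasureTheory.Supermartingale.measure_exists_ge_le {𝒢 : Filtration ℕ m0} {f : ℕ → Ω → ℝ}
    (hf : Supermartingale f 𝒢 μ) (hnonneg : 0 ≤ f) {ε : ℝ} (hε : 0 < ε) :
    μ {ω | ∃ k, ε ≤ f k ω} ≤ ENNReal.ofReal (μ[f 0] / ε) := by
  have hunion : {ω | ∃ k, ε ≤ f k ω} = ⋃ n, {ω | ∃ k ≤ n, ε ≤ f k ω} := by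
    ext ω
    simp only [Set.mem_ofPred_eq, Set.mem_iUnion]
    exact ⟨fun ⟨k, hk⟩ => ⟨k, k, le_rfl, hk⟩, fun ⟨_, k, _, hk⟩ => ⟨k, hk⟩⟩
  have hmono : Monotone fun n => {ω | ∃ k ≤ n, ε ≤ f k ω} :=
    fun _ _ hab _ ⟨k, hk, hfk⟩ => ⟨k, hk.trans hab, hfk⟩
  rw [hunion, hmono.measure_iUnion]
  exact iSup_le (hf.measure_exists_le_ge_le hnonneg hε)

end

section FreedmanProcess

variable {Ω : Type*} {m0 : MeasurableSpace Ω} (μ : Measure Ω) (ℱ : Filtration ℕ m0)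
  (X : ℕ → Ω → ℝ) (l : ℝ)

noncomputable def freedmanProcess (n : ℕ) (ω : Ω) : ℝ :=
  exp (l * ∑ t ∈ Finset.Icc 1 n, X t ω -
    (exp 1 - 2) * l ^ 2 * ∑ t ∈ Finset.Icc 1 n, μ[fun ω' => X t ω' ^ 2 | ℱ (t - 1)] ω)

theorem freedmanProcess_pos (n : ℕ) (ω : Ω) : 0 < freedmanProcess μ ℱ X l n ω := exp_pos _

theorem freedmanProcess_zero : freedmanProcess μ ℱ X l 0 = 1 := by
  funext ω
  simp [freedmanProcess]

theorem freedmanProcess_succ (n : ℕ) :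
    freedmanProcess μ ℱ X l (n + 1) =
      (fun ω => freedmanProcess μ ℱ X l n ω *
        exp (-((exp 1 - 2) * l ^ 2 * μ[fun ω => X (n + 1) ω ^ 2 | ℱ n] ω))) *
      fun ω => exp (l * X (n + 1) ω) := by
  funext ω
  simp only [freedmanProcess, Pi.mul_apply, ← exp_add,
    Finset.sum_Icc_succ_top (Nat.le_add_left 1 n), Nat.add_sub_cancel]
  ring_nf

variable {μ ℱ X l}

theorem stronglyAdapted_freedmanProcess (hX : StronglyAdapted ℱ X) :
    StronglyAdapted ℱ (freedmanProcess μ ℱ X l) := fun n =>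
  have hS : StronglyMeasurable[ℱ n] fun ω => ∑ t ∈ Finset.Icc 1 n, X t ω :=
    Finset.stronglyMeasurable_fun_sum _ fun t ht => (hX t).mono (ℱ.mono (Finset.mem_Icc.1 ht).2)
  have hV : StronglyMeasurable[ℱ n]
      fun ω => ∑ t ∈ Finset.Icc 1 n, μ[fun ω' => X t ω' ^ 2 | ℱ (t - 1)] ω :=
    Finset.stronglyMeasurable_fun_sum _ fun t ht =>
      stronglyMeasurable_condExp.mono (ℱ.mono ((Nat.sub_le t 1).trans (Finset.mem_Icc.1 ht).2))
  continuous_exp.comp_stronglyMeasurable ((hS.const_mul l).sub (hV.const_mul _))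

theorem freedmanProcess_le_exp (hbdd : ∀ t, ∀ᵐ ω ∂μ, |l * X t ω| ≤ 1) (n : ℕ) :
    ∀ᵐ ω ∂μ, freedmanProcess μ ℱ X l n ω ≤ exp n := by
  have hV : ∀ᵐ ω ∂μ, ∀ t, 0 ≤ μ[fun ω' => X t ω' ^ 2 | ℱ (t - 1)] ω :=
    ae_all_iff.2 fun t => condExp_nonneg (.of_forall fun ω => sq_nonneg _)
  filter_upwards [ae_all_iff.2 hbdd, hV] with ω hX hV
  have hS : l * ∑ t ∈ Finset.Icc 1 n, X t ω ≤ n := by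
    rw [Finset.mul_sum]
    calc _ ≤ ∑ t ∈ Finset.Icc 1 n, (1 : ℝ) := Finset.sum_le_sum fun t _ => le_of_abs_le (hX t)
      _ = n := by simp
  have hcompensator : 0 ≤ (exp 1 - 2) * l ^ 2 *
      ∑ t ∈ Finset.Icc 1 n, μ[fun ω' => X t ω' ^ 2 | ℱ (t - 1)] ω :=
    mul_nonneg (mul_nonneg (by linarith [add_one_le_exp (1 : ℝ)]) (sq_nonneg l))
      (Finset.sum_nonneg fun t _ => hV t)
  exact exp_le_exp.2 (by linarith)

theorem sum_lt_of_freedmanProcess_lt (hl : 0 < l) {ε : ℝ} (hε : 0 < ε) {n : ℕ} {ω : Ω}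
    (h : freedmanProcess μ ℱ X l n ω < ε) :
    ∑ t ∈ Finset.Icc 1 n, X t ω < (exp 1 - 2) * l *
      ∑ t ∈ Finset.Icc 1 n, μ[fun ω' => X t ω' ^ 2 | ℱ (t - 1)] ω + 1 / l * log ε := by
  have := (lt_log_iff_exp_lt hε).2 h
  rw [← mul_lt_mul_iff_right₀ hl]
  field_simp
  linarith

variable [IsFiniteMeasure μ]

theorem integrable_freedmanProcess (hX : StronglyAdapted ℱ X)
    (hbdd : ∀ t, ∀ᵐ ω ∂μ, |l * X t ω| ≤ 1) (n : ℕ) : Integrable (freedmanProcess μ ℱ X l n) μ := by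
  refine .of_bound ((stronglyAdapted_freedmanProcess hX n).mono (ℱ.le n)).aestronglyMeasurable
    (exp n) ?_
  filter_upwards [freedmanProcess_le_exp hbdd n] with ω hω
  rwa [Real.norm_eq_abs, abs_of_pos (freedmanProcess_pos μ ℱ X l n ω)]

theorem condExp_freedmanProcess_succ_le (hX : StronglyAdapted ℱ X)
    (hbdd : ∀ t, ∀ᵐ ω ∂μ, |l * X t ω| ≤ 1) (hmean : ∀ t ≥ 1, μ[X t | ℱ (t - 1)] =ᵐ[μ] 0)
    (n : ℕ) : μ[freedmanProcess μ ℱ X l (n + 1) | ℱ n] ≤ᵐ[μ] freedmanProcess μ ℱ X l n := by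
  set g := μ[fun ω => X (n + 1) ω ^ 2 | ℱ n]
  have hX_meas : AEStronglyMeasurable[m0] (fun ω => l * X (n + 1) ω) μ :=
    (((hX _).mono (ℱ.le _)).const_mul l).aestronglyMeasurable
  have hpredictable : StronglyMeasurable[ℱ n]
      fun ω => freedmanProcess μ ℱ X l n ω * exp (-((exp 1 - 2) * l ^ 2 * g ω)) :=
    (stronglyAdapted_freedmanProcess hX n).mul
      (continuous_exp.comp_stronglyMeasurable (stronglyMeasurable_condExp.const_mul _).neg)
  have hpull := condExp_mul_of_stronglyMeasurable_left hpredictable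
    (freedmanProcess_succ μ ℱ X l n ▸ integrable_freedmanProcess hX hbdd (n + 1))
    (integrable_exp_of_ae_le hX_meas ((hbdd (n + 1)).mono fun _ => le_of_abs_le))
  have hmean' : μ[fun ω => l * X (n + 1) ω | ℱ n] =ᵐ[μ] 0 := by
    have hmean_succ : μ[X (n + 1) | ℱ n] =ᵐ[μ] 0 := by
      simpa using hmean (n + 1) (Nat.le_add_left 1 n)
    filter_upwards [condExp_smul l (X (n + 1)) (ℱ n), hmean_succ] with ω h1 h2
    rw [Pi.smul_apply, h2, Pi.zero_apply, smul_zero] at h1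
    exact h1
  have hsq : μ[fun ω => (l * X (n + 1) ω) ^ 2 | ℱ n] =ᵐ[μ] fun ω => l ^ 2 * g ω := by
    have : (fun ω => (l * X (n + 1) ω) ^ 2) = l ^ 2 • fun ω => X (n + 1) ω ^ 2 := by
      funext ω
      simp [mul_pow]
    rw [this]
    exact condExp_smul _ _ _
  rw [freedmanProcess_succ]
  filter_upwards [hpull, condExp_exp_le_of_abs_le_one (ℱ.le n) hX_meas (hbdd (n + 1)) hmean', hsq]
    with ω h1 h2 h3
  rw [h1, Pi.mul_apply]
  have hweight := (freedmanProcess_pos μ ℱ X l n ω).le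
  calc _ ≤ freedmanProcess μ ℱ X l n ω * exp (-((exp 1 - 2) * l ^ 2 * g ω)) *
          exp ((exp 1 - 2) * (l ^ 2 * g ω)) := by
        rw [← h3]
        gcongr
    _ = freedmanProcess μ ℱ X l n ω := by
        rw [mul_assoc, ← exp_add, neg_add_eq_zero.2 (by ring), exp_zero, mul_one]

theorem supermartingale_freedmanProcess (hX : StronglyAdapted ℱ X)
    (hbdd : ∀ t, ∀ᵐ ω ∂μ, |l * X t ω| ≤ 1) (hmean : ∀ t ≥ 1, μ[X t | ℱ (t - 1)] =ᵐ[μ] 0) :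
    Supermartingale (freedmanProcess μ ℱ X l) ℱ μ :=
  supermartingale_nat (stronglyAdapted_freedmanProcess hX) (integrable_freedmanProcess hX hbdd)
    (condExp_freedmanProcess_succ_le hX hbdd hmean)

end FreedmanProcess

theorem freedman_time_uniform_general
    {Ω : Type*} {m0 : MeasurableSpace Ω} {μ : Measure Ω} [IsProbabilityMeasure μ]
    (ℱ : Filtration ℕ m0) (X : ℕ → Ω → ℝ) (c : ℝ)
    (hadapted : StronglyAdapted ℱ X)
    (hbdd : ∀ t, ∀ᵐ ω ∂μ, |X t ω| ≤ c)
    (hmds : ∀ t ≥ 1, μ[X t | ℱ (t - 1)] =ᵐ[μ] 0) :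
    ∀ l : ℝ, 0 < l → l ≤ 1 / c → ∀ δ : ℝ, δ ∈ Set.Ioc (0 : ℝ) 1 →
      ENNReal.ofReal (1 - δ) ≤
        μ {ω | ∀ n : ℕ, ∑ t ∈ Finset.Icc 1 n, X t ω <
          (Real.exp 1 - 2) * l *
            ∑ t ∈ Finset.Icc 1 n, (μ[fun ω' => (X t ω') ^ 2 | ℱ (t - 1)]) ω +
            (1 / l) * Real.log (1 / δ)} := by
  rintro l hl hlc δ ⟨hδ, -⟩
  have hlX (t : ℕ) : ∀ᵐ ω ∂μ, |l * X t ω| ≤ 1 := by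
    have hlc' : l * c ≤ 1 := by
      rcases le_or_gt c 0 with hc | hc
      · nlinarith
      · exact (le_div_iff₀ hc).1 hlc
    filter_upwards [hbdd t] with ω hω
    rw [abs_mul, abs_of_pos hl]
    nlinarith
  set B := {ω | ∃ n, 1 / δ ≤ freedmanProcess μ ℱ X l n ω}
  have hville : μ B ≤ ENNReal.ofReal δ := by
    simpa only [freedmanProcess_zero, Pi.one_apply, integral_const, probReal_univ, smul_eq_mul,
      mul_one, one_div_one_div] using
      (supermartingale_freedmanProcess hadapted hlX hmds).measure_exists_ge_le
        (fun n ω => (freedmanProcess_pos μ ℱ X l n ω).le) (one_div_pos.2 hδ)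
  have hgood : Bᶜ ⊆ _ := fun ω hω n =>
    sum_lt_of_freedmanProcess_lt hl (one_div_pos.2 hδ) (not_le.1 fun h => hω ⟨n, h⟩)
  calc ENNReal.ofReal (1 - δ) = 1 - ENNReal.ofReal δ := by
        rw [ENNReal.ofReal_sub _ hδ.le, ENNReal.ofReal_one]
    _ ≤ 1 - μ B := tsub_le_tsub_left hville 1
    _ ≤ μ Bᶜ := tsub_le_iff_right.2
        (by simpa only [Set.compl_union_self, measure_univ] using measure_union_le (μ := μ) Bᶜ B)
    _ ≤ _ := measure_mono hgood

theorem freedman_time_uniform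
    {Ω : Type*} {m0 : MeasurableSpace Ω} {μ : Measure Ω} [IsProbabilityMeasure μ]
    (ℱ : Filtration ℕ m0) (X : ℕ → Ω → ℝ) (c : ℝ) (hc : 0 ≤ c)
    (hadapted : StronglyAdapted ℱ X)
    (hbdd : ∀ t, ∀ᵐ ω ∂μ, |X t ω| ≤ c)
    (hmds : ∀ t ≥ 1, μ[X t | ℱ (t - 1)] =ᵐ[μ] 0) :
    ∀ l : ℝ, 0 < l → l ≤ 1 / c → ∀ δ : ℝ, δ ∈ Set.Ioc (0 : ℝ) 1 →
      ENNReal.ofReal (1 - δ) ≤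
        μ {ω | ∀ n : ℕ, ∑ t ∈ Finset.Icc 1 n, X t ω <
          (Real.exp 1 - 2) * l *
            ∑ t ∈ Finset.Icc 1 n, (μ[fun ω' => (X t ω') ^ 2 | ℱ (t - 1)]) ω +
            (1 / l) * Real.log (1 / δ)} :=
  freedman_time_uniform_general ℱ X c hadapted hbdd hmds
end

section
/- Let {X_h^k} (k ∈ ℕ, h ∈ {1,…,H}) be nonnegative random variables adapted to a filtration {F_h^k} (ordered lexicographically in (k,h)), and let c > 0 be a constant. Define J_{H+1}^k := 0 and J_h^k := min(X_h^k + E[J_{h+1}^k | F_h^k], c) for h = H down to 1. Then for any δ ∈ (0,1], with probability at least 1-δ, simultaneously for all K ∈ ℕ: Σ_{k=1}^K J_1^k ≤ 2·Σ_{k=1}^K Σ_{h=1}^H X_h^k + 6c·log(2/δ). -/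
/-!
Within an episode, backward induction on `h` turns the elementary inequality
`exp (-x / c) * (1 - m / (2c)) ≤ 1 - min (x + m) c / (2c)` (for `x ≥ 0`, `m ≤ c`) into
`E[exp (-(X_h + ⋯ + X_H) / c) | F_h] ≤ 1 - J_h / (2c)`. At `h = 1`, together with
`1 - t ≤ exp (-t)`, this makes `exp (∑_{k ≤ K} (J_1^k / (2c) - ∑_h X_h^k / c))` a nonnegative
supermartingale in `K` started at `1`. By Ville's maximal inequality it exceeds `1/δ` with
probability at most `δ`, and below `1/δ` we get `∑_k J_1^k ≤ 2 ∑_k ∑_h X_h^k + 2c log (1/δ)`.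
-/

open MeasureTheory ProbabilityTheory Real

theorem exp_neg_div_mul_one_sub_le {c x m : ℝ} (hc : 0 < c) (hx : 0 ≤ x) (hmc : m ≤ c) :
    exp (-(x / c)) * (1 - m / (2 * c)) ≤ 1 - min (x + m) c / (2 * c) := by
  set e := exp (-(x / c))
  have he : 0 < e := exp_pos _
  have hex : e * (c + x) ≤ c := by
    have h : e * (x / c + 1) ≤ 1 := calc
      e * (x / c + 1) ≤ e * exp (x / c) := mul_le_mul_of_nonneg_left (add_one_le_exp _) he.le
      _ = 1 := by rw [← exp_add, neg_add_cancel, exp_zero]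
    have : e * (c + x) = c * (e * (x / c + 1)) := by field_simp; ring
    nlinarith
  suffices e * (2 * c - m) ≤ 2 * c - min (x + m) c by
    rw [← mul_le_mul_iff_of_pos_right (by positivity : (0 : ℝ) < 2 * c)]
    field_simp
    linarith
  have hem := mul_le_mul_of_nonneg_right hex (by linarith : 0 ≤ 2 * c - m)
  rcases le_total (x + m) c with h | h
  · rw [min_eq_left h]
    nlinarith [mul_nonneg hx (by linarith : 0 ≤ c - x - m)]
  · rw [min_eq_right h]
    nlinarith

theorem le_two_mul_add_of_exp_lt_inv {a s c δ : ℝ} (hc : 0 < c) (hδ0 : 0 < δ) (hδ1 : δ ≤ 1)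
    (h : exp (a / (2 * c) - s / c) < δ⁻¹) : a ≤ 2 * s + 6 * c * log (2 / δ) := by
  have hlog : log δ⁻¹ ≤ log (2 / δ) :=
    log_le_log (inv_pos.2 hδ0) (by rw [div_eq_mul_inv]; linarith [inv_pos.2 hδ0])
  have hlog0 : 0 ≤ log (2 / δ) := log_nonneg (by rw [le_div_iff₀ hδ0]; linarith)
  have h' : (a - 2 * s) / (2 * c) < log (2 / δ) := by
    refine lt_of_lt_of_le ?_ hlog
    rw [lt_log_iff_exp_lt (inv_pos.2 hδ0)]
    convert h using 2
    field_simp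
  rw [div_lt_iff₀ (by positivity)] at h'
  nlinarith

namespace MeasureTheory

variable {Ω : Type*} {m m' m0 : MeasurableSpace Ω} {μ : Measure Ω} {𝒢 : Filtration ℕ m0}

theorem ofReal_one_sub_le_measure_compl [IsProbabilityMeasure μ] {s : Set Ω} {δ : ℝ}
    (hδ : 0 ≤ δ) (hs : μ s ≤ ENNReal.ofReal δ) : ENNReal.ofReal (1 - δ) ≤ μ sᶜ := by
  rw [ENNReal.ofReal_sub _ hδ, ENNReal.ofReal_one, tsub_le_iff_left, ← measure_univ (μ := μ)]
  exact (measure_univ_le_add_compl s).trans (add_le_add hs le_rfl)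

theorem integrable_exp_of_ae_le [IsFiniteMeasure μ] {g : Ω → ℝ} {b : ℝ} (hg : AEMeasurable g μ)
    (hgb : ∀ᵐ ω ∂μ, g ω ≤ b) : Integrable (fun ω => exp (g ω)) μ :=
  .of_bound hg.exp.aestronglyMeasurable (exp b) <| hgb.mono fun ω hω => by
    rwa [norm_of_nonneg (exp_pos _).le, exp_le_exp]

theorem condExp_le_condExp_of_condExp_le (hm : m ≤ m') (hm' : m' ≤ m0)
    [SigmaFinite (μ.trim hm')] {f g : Ω → ℝ} (hg : Integrable g μ) (hfg : μ[f | m'] ≤ᵐ[μ] g) :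
    μ[f | m] ≤ᵐ[μ] μ[g | m] :=
  (condExp_condExp_of_le hm hm').symm.le.trans (condExp_mono integrable_condExp hg hfg)

theorem condExp_const_sub_div [IsFiniteMeasure μ] (hm : m ≤ m0) {f : Ω → ℝ}
    (hf : Integrable f μ) (a b : ℝ) :
    μ[fun ω => a - f ω / b | m] =ᵐ[μ] fun ω => a - μ[f | m] ω / b := by
  have hfb : (fun ω => a - f ω / b) = (fun _ => a) - b⁻¹ • f := by
    ext ω; simp [div_eq_inv_mul]
  rw [hfb]
  filter_upwards [condExp_sub (integrable_const a) (hf.smul b⁻¹) m, condExp_smul b⁻¹ f m]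
    with ω hsub hsmul
  simp [hsub, hsmul, condExp_const hm, div_eq_inv_mul]

theorem condExp_exp_neg_div_mul_le [IsFiniteMeasure μ] (hm : m ≤ m') (hm' : m' ≤ m0)
    {x E j : Ω → ℝ} {c : ℝ} (hc : 0 < c) (hx : StronglyMeasurable[m] x) (hx0 : ∀ ω, 0 ≤ x ω)
    (hE : Integrable E μ) (hj : Integrable j μ) (hjc : ∀ᵐ ω ∂μ, j ω ≤ c)
    (hEj : μ[E | m'] ≤ᵐ[μ] fun ω => 1 - j ω / (2 * c)) :
    μ[fun ω => exp (-(x ω / c)) * E ω | m] ≤ᵐ[μ]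
      fun ω => 1 - min (x ω + μ[j | m] ω) c / (2 * c) := by
  have hexp : StronglyMeasurable[m] fun ω => exp (-(x ω / c)) :=
    (hx.measurable.div_const c).neg.exp.stronglyMeasurable
  have hexp_le : ∀ ω, ‖exp (-(x ω / c))‖ ≤ 1 := fun ω => by
    rw [norm_of_nonneg (exp_pos _).le, exp_le_one_iff, neg_nonpos]
    exact div_nonneg (hx0 ω) hc.le
  have hpull : μ[fun ω => exp (-(x ω / c)) * E ω | m] =ᵐ[μ]
      fun ω => exp (-(x ω / c)) * μ[E | m] ω :=
    condExp_mul_of_stronglyMeasurable_left hexp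
      (hE.bdd_mul (hexp.mono (hm.trans hm')).aestronglyMeasurable (.of_forall hexp_le)) hE
  have htower : μ[E | m] ≤ᵐ[μ] fun ω => 1 - μ[j | m] ω / (2 * c) :=
    (condExp_le_condExp_of_condExp_le hm hm' ((integrable_const 1).sub (hj.div_const _))
      hEj).trans (condExp_const_sub_div (hm.trans hm') hj 1 (2 * c)).le
  have hjm : μ[j | m] ≤ᵐ[μ] fun _ => c := by
    simpa [condExp_const (hm.trans hm')] using condExp_mono (m := m) hj (integrable_const c) hjc
  filter_upwards [hpull, htower, hjm] with ω hpull htower hjm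
  rw [hpull]
  exact (mul_le_mul_of_nonneg_left htower (exp_pos _).le).trans
    (exp_neg_div_mul_one_sub_le hc (hx0 ω) hjm)

theorem Supermartingale.expected_stoppedValue_anti [SigmaFiniteFiltration μ 𝒢]
    {f : ℕ → Ω → ℝ} (hf : Supermartingale f 𝒢 μ) {σ τ : Ω → WithTop ℕ}
    (hσ : IsStoppingTime 𝒢 σ) (hτ : IsStoppingTime 𝒢 τ) (hle : σ ≤ τ) {N : ℕ}
    (hbdd : ∀ ω, τ ω ≤ N) : μ[stoppedValue f τ] ≤ μ[stoppedValue f σ] := by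
  simpa only [stoppedValue, Pi.neg_apply, integral_neg, neg_le_neg_iff] using
    hf.neg.expected_stoppedValue_mono hσ hτ hle hbdd

theorem Supermartingale.ville_ineq_finite [IsFiniteMeasure μ] {f : ℕ → Ω → ℝ}
    (hf : Supermartingale f 𝒢 μ) (hf0 : 0 ≤ f) {ε : ℝ} (hε : 0 < ε) (N : ℕ) :
    μ {ω | ∃ n ≤ N, ε ≤ f n ω} ≤ ENNReal.ofReal (μ[f 0] / ε) := by
  set τ : Ω → WithTop ℕ := fun ω => (hittingBtwn f (Set.Ici ε) 0 N ω : ℕ)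
  have hτ : IsStoppingTime 𝒢 τ :=
    hf.stronglyAdapted.adapted.isStoppingTime_hittingBtwn measurableSet_Ici
  have hτN : ∀ ω, τ ω ≤ N := fun ω => WithTop.coe_le_coe.mpr (hittingBtwn_le ω)
  have hτint : Integrable (stoppedValue f τ) μ := by
    simpa [stoppedValue] using (hf.neg.integrable_stoppedValue hτ hτN).neg
  have hsub : {ω | ∃ n ≤ N, ε ≤ f n ω} ⊆ {ω | ε ≤ stoppedValue f τ ω} :=
    fun ω ⟨n, hn, hfn⟩ => stoppedValue_hittingBtwn_mem ⟨n, ⟨n.zero_le, hn⟩, hfn⟩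
  have hmarkov := mul_meas_ge_le_integral_of_nonneg (.of_forall fun ω => hf0 _ ω) hτint ε
  have hstop := hf.expected_stoppedValue_anti (isStoppingTime_const 𝒢 0) hτ
    (fun ω => WithTop.coe_le_coe.mpr (Nat.zero_le _)) hτN
  calc μ {ω | ∃ n ≤ N, ε ≤ f n ω} ≤ μ {ω | ε ≤ stoppedValue f τ ω} := measure_mono hsub
    _ = ENNReal.ofReal (μ.real {ω | ε ≤ stoppedValue f τ ω}) :=
      (ofReal_measureReal (measure_ne_top _ _)).symm
    _ ≤ ENNReal.ofReal (μ[f 0] / ε) := by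
      refine ENNReal.ofReal_le_ofReal ((le_div_iff₀' hε).2 (hmarkov.trans ?_))
      simpa [stoppedValue] using hstop

theorem Supermartingale.ville_ineq [IsFiniteMeasure μ] {f : ℕ → Ω → ℝ}
    (hf : Supermartingale f 𝒢 μ) (hf0 : 0 ≤ f) {ε : ℝ} (hε : 0 < ε) :
    μ {ω | ∃ n, ε ≤ f n ω} ≤ ENNReal.ofReal (μ[f 0] / ε) := by
  have hunion : {ω | ∃ n, ε ≤ f n ω} = ⋃ N, {ω | ∃ n ≤ N, ε ≤ f n ω} := by
    ext ω; simp only [Set.mem_iUnion]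
    exact ⟨fun ⟨n, hn⟩ => ⟨n, n, le_rfl, hn⟩, fun ⟨_, n, _, hn⟩ => ⟨n, hn⟩⟩
  have hmono : Monotone fun N => {ω | ∃ n ≤ N, ε ≤ f n ω} :=
    fun _ _ hNM _ ⟨n, hn, hfn⟩ => ⟨n, hn.trans hNM, hfn⟩
  rw [hunion, hmono.measure_iUnion]
  exact iSup_le (hf.ville_ineq_finite hf0 hε)

theorem supermartingale_exp_sum [IsFiniteMeasure μ] {D : ℕ → Ω → ℝ} {b : ℝ}
    (hD : ∀ n, StronglyMeasurable[𝒢 (n + 1)] (D n)) (hDb : ∀ n, ∀ᵐ ω ∂μ, D n ω ≤ b)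
    (hcond : ∀ n, μ[fun ω => exp (D n ω) | 𝒢 n] ≤ᵐ[μ] 1) :
    Supermartingale (fun n ω => exp (∑ k ∈ Finset.range n, D k ω)) 𝒢 μ := by
  have hsum : ∀ n, StronglyMeasurable[𝒢 n] fun ω => ∑ k ∈ Finset.range n, D k ω := fun n =>
    (Finset.measurable_fun_sum _ fun k hk =>
      ((hD k).mono (𝒢.mono (Finset.mem_range.1 hk))).measurable).stronglyMeasurable
  have hint : ∀ n, Integrable (fun ω => exp (∑ k ∈ Finset.range n, D k ω)) μ := fun n => by
    refine integrable_exp_of_ae_le (b := n * b)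
      ((hsum n).mono (𝒢.le n)).measurable.aemeasurable ?_
    filter_upwards [ae_all_iff.2 hDb] with ω hω
    simpa using Finset.sum_le_sum fun k (_ : k ∈ Finset.range n) => hω k
  refine supermartingale_nat (fun n => (hsum n).measurable.exp.stronglyMeasurable) hint
    fun n => ?_
  have hsplit : (fun ω => exp (∑ k ∈ Finset.range (n + 1), D k ω)) =
      (fun ω => exp (∑ k ∈ Finset.range n, D k ω)) * fun ω => exp (D n ω) := by
    ext ω; rw [Finset.sum_range_succ, exp_add, Pi.mul_apply]
  have hexpD : Integrable (fun ω => exp (D n ω)) μ :=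
    integrable_exp_of_ae_le ((hD n).mono (𝒢.le _)).measurable.aemeasurable (hDb n)
  rw [hsplit]
  filter_upwards [condExp_mul_of_stronglyMeasurable_left
    (hsum n).measurable.exp.stronglyMeasurable (hsplit ▸ hint (n + 1)) hexpD, hcond n]
    with ω hpull hle
  rw [hpull, Pi.mul_apply]
  exact mul_le_of_le_one_right (exp_pos _).le hle

noncomputable def expNegTailSum (X : ℕ → Ω → ℝ) (H : ℕ) (c : ℝ) (h : ℕ) (ω : Ω) : ℝ :=
  exp (-((∑ i ∈ Finset.Icc h H, X i ω) / c))

theorem expNegTailSum_eq_mul (X : ℕ → Ω → ℝ) (c : ℝ) {h H : ℕ} (hh : h ≤ H) :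
    expNegTailSum X H c h = fun ω => exp (-(X h ω / c)) * expNegTailSum X H c (h + 1) ω := by
  ext ω
  rw [expNegTailSum, expNegTailSum, ← exp_add,
    ← Finset.insert_Icc_add_one_left_eq_Icc hh, Finset.sum_insert (by simp)]
  congr 1
  ring

theorem integrable_expNegTailSum [IsFiniteMeasure μ] {X : ℕ → Ω → ℝ}
    (hX : ∀ i, Measurable (X i)) (hX0 : ∀ i ω, 0 ≤ X i ω) {c : ℝ} (hc : 0 ≤ c) (H h : ℕ) :
    Integrable (expNegTailSum X H c h) μ :=
  integrable_exp_of_ae_le (b := 0) ((Finset.measurable_fun_sum _ fun i _ => hX i).div_const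
    c).neg.aemeasurable <| .of_forall fun ω =>
      neg_nonpos.2 (div_nonneg (Finset.sum_nonneg fun i _ => hX0 i ω) hc)

structure IsClippedRecursion (μ : Measure Ω) (F : ℕ → MeasurableSpace Ω) (X J : ℕ → Ω → ℝ)
    (H : ℕ) (c : ℝ) : Prop where
  top : ∀ ω, J (H + 1) ω = 0
  step : ∀ h ∈ Finset.Icc 1 H, J h =ᵐ[μ] fun ω => min (X h ω + μ[J (h + 1) | F h] ω) c

namespace IsClippedRecursion

variable {F : ℕ → MeasurableSpace Ω} {X J : ℕ → Ω → ℝ} {H : ℕ} {c : ℝ}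

theorem aestronglyMeasurable (hJ : IsClippedRecursion μ F X J H c)
    (hX : ∀ h, StronglyMeasurable[F h] (X h)) {h : ℕ} (hh : h ∈ Finset.Icc 1 (H + 1)) :
    AEStronglyMeasurable[F h] (J h) μ := by
  rcases eq_or_lt_of_le (Finset.mem_Icc.1 hh).2 with rfl | hlt
  · exact ⟨0, stronglyMeasurable_zero, .of_forall hJ.top⟩
  · exact ⟨_, (((hX h).measurable.add stronglyMeasurable_condExp.measurable).min
      measurable_const).stronglyMeasurable,
      hJ.step h (Finset.mem_Icc.2 ⟨(Finset.mem_Icc.1 hh).1, Nat.lt_succ_iff.1 hlt⟩)⟩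

theorem ae_le (hJ : IsClippedRecursion μ F X J H c) (hc : 0 ≤ c) {h : ℕ}
    (hh : h ∈ Finset.Icc 1 (H + 1)) : ∀ᵐ ω ∂μ, J h ω ≤ c := by
  rcases eq_or_lt_of_le (Finset.mem_Icc.1 hh).2 with rfl | hlt
  · exact .of_forall fun ω => (hJ.top ω).trans_le hc
  · filter_upwards [hJ.step h (Finset.mem_Icc.2 ⟨(Finset.mem_Icc.1 hh).1, Nat.lt_succ_iff.1 hlt⟩)]
      with ω hω
    exact hω ▸ min_le_right _ _

theorem ae_nonneg (hJ : IsClippedRecursion μ F X J H c) (hX0 : ∀ h ω, 0 ≤ X h ω) (hc : 0 ≤ c)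
    {h : ℕ} (hh : h ∈ Finset.Icc 1 (H + 1)) : 0 ≤ᵐ[μ] J h := by
  obtain ⟨h1, hH⟩ := Finset.mem_Icc.1 hh
  clear hh
  induction hH using Nat.decreasingInduction with
  | self => exact .of_forall fun ω => (hJ.top ω).ge
  | of_succ h hlt ih =>
    filter_upwards [hJ.step h (Finset.mem_Icc.2 ⟨h1, Nat.lt_succ_iff.1 hlt⟩),
      condExp_nonneg (m := F h) (ih (by omega))] with ω hJω h0
    exact hJω ▸ le_min (add_nonneg (hX0 h ω) h0) hc

theorem integrable [IsFiniteMeasure μ] (hJ : IsClippedRecursion μ F X J H c)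
    (hle : ∀ h, F h ≤ m0) (hX0 : ∀ h ω, 0 ≤ X h ω) (hX : ∀ h, StronglyMeasurable[F h] (X h))
    (hc : 0 ≤ c) {h : ℕ} (hh : h ∈ Finset.Icc 1 (H + 1)) : Integrable (J h) μ :=
  .of_bound ((hJ.aestronglyMeasurable hX hh).mono (hle h)) c <| by
    filter_upwards [hJ.ae_nonneg hX0 hc hh, hJ.ae_le hc hh] with ω h0 hJc
    rwa [norm_of_nonneg h0]

theorem condExp_expNegTailSum_le [IsFiniteMeasure μ] (hJ : IsClippedRecursion μ F X J H c)
    (hle : ∀ h, F h ≤ m0) (hmono : ∀ h, F h ≤ F (h + 1)) (hX0 : ∀ h ω, 0 ≤ X h ω)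
    (hX : ∀ h, StronglyMeasurable[F h] (X h)) (hc : 0 < c) {h : ℕ}
    (hh : h ∈ Finset.Icc 1 (H + 1)) :
    μ[expNegTailSum X H c h | F h] ≤ᵐ[μ] fun ω => 1 - J h ω / (2 * c) := by
  obtain ⟨h1, hH⟩ := Finset.mem_Icc.1 hh
  clear hh
  induction hH using Nat.decreasingInduction with
  | self =>
    have : expNegTailSum X H c (H + 1) = fun _ => 1 := by ext; simp [expNegTailSum]
    exact .of_forall fun ω => by simp [this, hJ.top, condExp_const (hle _)]
  | of_succ h hlt ih =>
    have hh' : h + 1 ∈ Finset.Icc 1 (H + 1) := Finset.mem_Icc.2 ⟨by omega, hlt⟩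
    have hstep := hJ.step h (Finset.mem_Icc.2 ⟨h1, Nat.lt_succ_iff.1 hlt⟩)
    rw [expNegTailSum_eq_mul X c (Nat.lt_succ_iff.1 hlt)]
    filter_upwards [condExp_exp_neg_div_mul_le (hmono h) (hle _) hc (hX h) (hX0 h)
      (integrable_expNegTailSum (fun i => ((hX i).mono (hle i)).measurable) hX0 hc.le H _)
      (hJ.integrable hle hX0 hX hc.le hh') (hJ.ae_le hc.le hh') (ih (by omega)), hstep]
      with ω hω hJω
    rwa [hJω]

theorem ae_div_sub_div_le_half (hJ : IsClippedRecursion μ F X J H c) (hc : 0 < c)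
    (hX0 : ∀ h ω, 0 ≤ X h ω) {M : Ω → ℝ} (hJM : J 1 =ᵐ[μ] M) :
    ∀ᵐ ω ∂μ, M ω / (2 * c) - (∑ h ∈ Finset.Icc 1 H, X h ω) / c ≤ 1 / 2 := by
  filter_upwards [hJ.ae_le hc.le (h := 1) (by simp), hJM] with ω hJc hJω
  have : M ω / (2 * c) ≤ 1 / 2 := by rw [div_le_iff₀ (by positivity)]; linarith
  linarith [div_nonneg (Finset.sum_nonneg fun h (_ : h ∈ Finset.Icc 1 H) => hX0 h ω) hc.le]

theorem condExp_exp_sub_le_one [IsFiniteMeasure μ] (hJ : IsClippedRecursion μ F X J H c)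
    (hle : ∀ h, F h ≤ m0) (hmono : ∀ h, F h ≤ F (h + 1)) (hX0 : ∀ h ω, 0 ≤ X h ω)
    (hX : ∀ h, StronglyMeasurable[F h] (X h)) (hc : 0 < c) {M : Ω → ℝ}
    (hM : StronglyMeasurable[F 1] M) (hJM : J 1 =ᵐ[μ] M) :
    μ[fun ω => exp (M ω / (2 * c) - (∑ h ∈ Finset.Icc 1 H, X h ω) / c) | F 1] ≤ᵐ[μ] 1 := by
  have hsplit : (fun ω => exp (M ω / (2 * c) - (∑ h ∈ Finset.Icc 1 H, X h ω) / c)) =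
      (fun ω => exp (M ω / (2 * c))) * expNegTailSum X H c 1 := by
    ext ω; rw [Pi.mul_apply, expNegTailSum, ← exp_add, sub_eq_add_neg]
  have hint : Integrable (fun ω => exp (M ω / (2 * c) - (∑ h ∈ Finset.Icc 1 H, X h ω) / c)) μ :=
    integrable_exp_of_ae_le (((hM.mono (hle 1)).measurable.div_const _).sub
      ((Finset.measurable_fun_sum _ fun h _ => ((hX h).mono (hle h)).measurable).div_const
        _)).aemeasurable (hJ.ae_div_sub_div_le_half hc hX0 hJM)
  rw [hsplit] at hint ⊢
  filter_upwards [condExp_mul_of_stronglyMeasurable_left (m := F 1)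
    (hM.measurable.div_const _).exp.stronglyMeasurable hint
    (integrable_expNegTailSum (fun i => ((hX i).mono (hle i)).measurable) hX0 hc.le H 1),
    hJ.condExp_expNegTailSum_le hle hmono hX0 hX hc (h := 1) (by simp), hJM]
    with ω hpull htail hJω
  rw [hpull, Pi.mul_apply, Pi.one_apply]
  rw [hJω] at htail
  calc exp (M ω / (2 * c)) * μ[_ | F 1] ω ≤ exp (M ω / (2 * c)) * exp (-(M ω / (2 * c))) := by
        gcongr
        linarith [add_one_le_exp (-(M ω / (2 * c)))]
    _ = 1 := by rw [← exp_add, add_neg_cancel, exp_zero]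

end IsClippedRecursion

end MeasureTheory

theorem clipped_sum_lemma_general
    {Ω : Type*} {m0 : MeasurableSpace Ω} {μ : Measure Ω} [IsProbabilityMeasure μ]
    (H : ℕ)
    (F : ℕ → ℕ → MeasurableSpace Ω)
    (hle : ∀ k h, F k h ≤ m0)
    (hmono : ∀ k h, F k h ≤ F k (h + 1))
    (hlink : ∀ k, F k (H + 1) = F (k + 1) 1)
    (X : ℕ → ℕ → Ω → ℝ)
    (hXnonneg : ∀ k h ω, 0 ≤ X k h ω)
    (hXadapted : ∀ k h, StronglyMeasurable[F k h] (X k h))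
    (c : ℝ) (hc : 0 < c)
    (J : ℕ → ℕ → Ω → ℝ)
    (hJtop : ∀ k ω, J k (H + 1) ω = 0)
    (hJ : ∀ k, ∀ h ∈ Finset.Icc 1 H,
      J k h =ᵐ[μ] fun ω => min (X k h ω + (μ[J k (h + 1) | F k h]) ω) c) :
    ∀ δ : ℝ, δ ∈ Set.Ioc (0 : ℝ) 1 →
      ENNReal.ofReal (1 - δ) ≤
        μ {ω | ∀ K : ℕ, ∑ k ∈ Finset.Icc 1 K, J k 1 ω ≤
            2 * ∑ k ∈ Finset.Icc 1 K, ∑ h ∈ Finset.Icc 1 H, X k h ω +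
              6 * c * Real.log (2 / δ)} := by
  rintro δ ⟨hδ0, hδ1⟩
  have hrec : ∀ k, IsClippedRecursion μ (F k) (X k) (J k) H c := fun k => ⟨hJtop k, hJ k⟩
  -- `J k 1` is only determined a.e.; the supermartingale needs an `F k 1`-measurable version.
  choose M hM hJM using fun k => (hrec k).aestronglyMeasurable (hXadapted k) (h := 1) (by simp)
  have hFmono : ∀ k, Monotone (F k) := fun k => monotone_nat_of_le_succ (hmono k)
  have hF1 : ∀ k, F k 1 ≤ F (k + 1) 1 := fun k => hlink k ▸ hFmono k (by omega)
  let 𝒢 : Filtration ℕ m0 :=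
    ⟨fun k => F (k + 1) 1, monotone_nat_of_le_succ fun k => hF1 (k + 1), fun k => hle _ _⟩
  let D : ℕ → Ω → ℝ := fun k ω =>
    M (k + 1) ω / (2 * c) - (∑ h ∈ Finset.Icc 1 H, X (k + 1) h ω) / c
  have hD : ∀ n, StronglyMeasurable[𝒢 (n + 1)] (D n) := fun n =>
    (((hM (n + 1)).mono (hF1 (n + 1))).measurable.div_const _ |>.sub <|
      (Finset.measurable_fun_sum _ fun h hh => ((hXadapted (n + 1) h).mono <| hlink (n + 1) ▸
        hFmono (n + 1) (Nat.le_succ_of_le (Finset.mem_Icc.1 hh).2)).measurable).div_const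
        _).stronglyMeasurable
  have hW : Supermartingale (fun n ω => exp (∑ k ∈ Finset.range n, D k ω)) 𝒢 μ :=
    supermartingale_exp_sum hD
      (fun n => (hrec (n + 1)).ae_div_sub_div_le_half hc (hXnonneg _) (hJM _))
      fun n => (hrec (n + 1)).condExp_exp_sub_le_one (hle _) (hmono _) (hXnonneg _)
        (hXadapted _) hc (hM _) (hJM _)
  have hville : μ {ω | ∃ n, δ⁻¹ ≤ exp (∑ k ∈ Finset.range n, D k ω)} ≤ ENNReal.ofReal δ := by
    simpa using hW.ville_ineq (fun n ω => (exp_pos _).le) (inv_pos.2 hδ0)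
  refine (ofReal_one_sub_le_measure_compl hδ0.le hville).trans (measure_mono_ae ?_)
  filter_upwards [ae_all_iff.2 hJM] with ω hJω hω K
  have hsum : ∑ k ∈ Finset.range K, D k ω = (∑ k ∈ Finset.Icc 1 K, J k 1 ω) / (2 * c) -
      (∑ k ∈ Finset.Icc 1 K, ∑ h ∈ Finset.Icc 1 H, X k h ω) / c := by
    simp only [D, hJω, Finset.sum_sub_distrib, ← Finset.sum_div]
    rw [Finset.range_eq_Ico, Finset.sum_Ico_add' (fun k => M k ω), Finset.sum_Ico_add'
      (fun k => ∑ h ∈ Finset.Icc 1 H, X k h ω), zero_add, Finset.Ico_add_one_right_eq_Icc]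
  exact le_two_mul_add_of_exp_lt_inv hc hδ0 hδ1 (hsum ▸ not_le.1 fun h => hω ⟨K, h⟩)

theorem clipped_sum_lemma
    {Ω : Type*} {m0 : MeasurableSpace Ω} {μ : Measure Ω} [IsProbabilityMeasure μ]
    (H : ℕ) (hH : 1 ≤ H)
    (F : ℕ → ℕ → MeasurableSpace Ω)
    (hle : ∀ k h, F k h ≤ m0)
    (hmono : ∀ k h, F k h ≤ F k (h + 1))
    (hlink : ∀ k, F k (H + 1) = F (k + 1) 1)
    (X : ℕ → ℕ → Ω → ℝ)
    (hXnonneg : ∀ k h ω, 0 ≤ X k h ω)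
    (hXadapted : ∀ k h, StronglyMeasurable[F k h] (X k h))
    (c : ℝ) (hc : 0 < c)
    (J : ℕ → ℕ → Ω → ℝ)
    (hJtop : ∀ k ω, J k (H + 1) ω = 0)
    (hJ : ∀ k, ∀ h ∈ Finset.Icc 1 H,
      J k h =ᵐ[μ] fun ω => min (X k h ω + (μ[J k (h + 1) | F k h]) ω) c) :
    ∀ δ : ℝ, δ ∈ Set.Ioc (0 : ℝ) 1 →
      ENNReal.ofReal (1 - δ) ≤
        μ {ω | ∀ K : ℕ, ∑ k ∈ Finset.Icc 1 K, J k 1 ω ≤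
            2 * ∑ k ∈ Finset.Icc 1 K, ∑ h ∈ Finset.Icc 1 H, X k h ω +
              6 * c * Real.log (2 / δ)} :=
  clipped_sum_lemma_general H F hle hmono hlink X hXnonneg hXadapted c hc J hJtop hJ
end
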